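/- arXiv:2411.17378 — 6 statements merged into one kernel-verified Lean document; each statement's English description precedes it below -/
import Mathlib

section
/- Let F = C(q^{1/2}, t^{1/2}) and consider the operators on F(X) (rational functions in X): multiplication by x = X + X^{-1}, and y = V(X)ϖ + V(X^{-1})ϖ^{-1}, z = q^{-1/2}X^{-1}V(X)ϖ + q^{-1/2}X V(X^{-1})ϖ^{-1}, where V(X) = (t^{1/2}X - t^{-1/2}X^{-1})/(X - X^{-1}) and (ϖ f)(X) = f(qX). Then these operators satisfy q^{1/2}xy - q^{-1/2}yx = (q - q^{-1})z. -/
/-!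
Conjugating a multiplication operator by `ϖ^{±1}` applies `ϖ^{±1}` to the multiplier, so the
`ϖ`-part of `q^{1/2} x y - q^{-1/2} y x` is multiplication by `V (q^{1/2} x - q^{-1/2} ϖ(x))`
followed by `ϖ`. As `ϖ(x) = qX + q⁻¹X⁻¹`, the `X`-terms cancel and `(q - q⁻¹) q^{-1/2} X⁻¹ V`
is left; the `ϖ⁻¹`-part is the same with `X` and `X⁻¹` exchanged. Nothing about `V` and `W`
is used.
-/

theorem AlgEquiv.symm_apply_eq_algebraMap_inv_mul {F A : Type*} [Field F] [Semiring A]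
    [Algebra F A] (σ : A ≃ₐ[F] A) {a : F} (ha : a ≠ 0) {u : A}
    (hu : σ u = algebraMap F A a * u) :
    σ.symm u = algebraMap F A a⁻¹ * u := by
  rw [σ.symm_apply_eq, map_mul, σ.commutes, hu, ← mul_assoc, ← map_mul, inv_mul_cancel₀ ha,
    map_one, one_mul]

theorem mul_add_sub_inv_mul_add {K : Type*} [Field K] {q : K} (hq : q ≠ 0) (u v : K) :
    q * (u + v) - q⁻¹ * (q ^ 2 * u + (q ^ 2)⁻¹ * v) = (q ^ 2 - (q ^ 2)⁻¹) * (q⁻¹ * v) := by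
  field_simp
  ring

/-- `q2`, `t2` stand for `q^{1/2}`, `t^{1/2}`, and `W` for `V(X⁻¹)`. -/
theorem skein_commutator_polynomial_rep_general
    (F : Type*) [Field F] (q2 t2 : F) (hq : q2 ≠ 0)
    (ϖ : RatFunc F ≃ₐ[F] RatFunc F)
    (hϖ : ϖ RatFunc.X = algebraMap F (RatFunc F) (q2 ^ 2) * RatFunc.X) :
    let X : RatFunc F := RatFunc.X
    let c : F → RatFunc F := algebraMap F (RatFunc F)
    let V : RatFunc F := (c t2 * X - c t2⁻¹ * X⁻¹) / (X - X⁻¹)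
    let W : RatFunc F := (c t2 * X⁻¹ - c t2⁻¹ * X) / (X⁻¹ - X)
    let x : RatFunc F →ₗ[F] RatFunc F := LinearMap.mulLeft F (X + X⁻¹)
    let y : RatFunc F →ₗ[F] RatFunc F :=
      LinearMap.mulLeft F V ∘ₗ ϖ.toLinearMap + LinearMap.mulLeft F W ∘ₗ ϖ.symm.toLinearMap
    let z : RatFunc F →ₗ[F] RatFunc F :=
      LinearMap.mulLeft F (c q2⁻¹ * X⁻¹ * V) ∘ₗ ϖ.toLinearMap +
        LinearMap.mulLeft F (c q2⁻¹ * X * W) ∘ₗ ϖ.symm.toLinearMap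
    q2 • (x ∘ₗ y) - q2⁻¹ • (y ∘ₗ x) = (q2 ^ 2 - (q2 ^ 2)⁻¹) • z := by
  intro X c V W x y z
  clear_value V W
  have hcq : c q2 ≠ 0 := (map_ne_zero _).mpr hq
  have hϖX : ϖ X = c q2 ^ 2 * X := by rw [← map_pow]; exact hϖ
  have hϖ_symm_X : ϖ.symm X = (c q2 ^ 2)⁻¹ * X := by
    rw [← map_pow, ← map_inv₀]
    exact ϖ.symm_apply_eq_algebraMap_inv_mul (pow_ne_zero 2 hq) hϖ
  have forward := mul_add_sub_inv_mul_add hcq X X⁻¹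
  have backward := mul_add_sub_inv_mul_add hcq X⁻¹ X
  ext f
  simp only [x, y, z, LinearMap.sub_apply, LinearMap.smul_apply, LinearMap.comp_apply,
    LinearMap.add_apply, LinearMap.mulLeft_apply, AlgEquiv.toLinearMap_apply, map_add, map_mul,
    map_inv₀, hϖX, hϖ_symm_X]
  simp only [c, Algebra.smul_def, map_sub, map_pow, map_inv₀, mul_inv, inv_inv] at *
  linear_combination (V * ϖ f) * forward + (W * ϖ.symm f) * backward

/-- in the polynomial representation on `F(X)` (`F = ℂ(q^{1/2}, t^{1/2})`,
here an arbitrary field containing `q2 = q^{1/2}` and `t2 = t^{1/2}`), the operators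
`x = X + X⁻¹`, `y = V(X)ϖ + V(X⁻¹)ϖ⁻¹`, `z = q^{-1/2}X⁻¹V(X)ϖ + q^{-1/2}XV(X⁻¹)ϖ⁻¹`
(where `ϖ` is the `F`-algebra automorphism of `F(X)` with `ϖ(X) = qX`,
`V(X) = (t^{1/2}X - t^{-1/2}X⁻¹)/(X - X⁻¹)`) satisfy
`q^{1/2}·x∘y - q^{-1/2}·y∘x = (q - q⁻¹)·z`. -/
theorem skein_commutator_polynomial_rep
    (F : Type*) [Field F] (q2 t2 : F) (hq : q2 ≠ 0) (ht : t2 ≠ 0)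
    (ϖ : RatFunc F ≃ₐ[F] RatFunc F)
    (hϖ : ϖ RatFunc.X = algebraMap F (RatFunc F) (q2 ^ 2) * RatFunc.X) :
    let X : RatFunc F := RatFunc.X
    let c : F → RatFunc F := algebraMap F (RatFunc F)
    let V : RatFunc F := (c t2 * X - c t2⁻¹ * X⁻¹) / (X - X⁻¹)
    let W : RatFunc F := (c t2 * X⁻¹ - c t2⁻¹ * X) / (X⁻¹ - X)
    let x : RatFunc F →ₗ[F] RatFunc F := LinearMap.mulLeft F (X + X⁻¹)
    let y : RatFunc F →ₗ[F] RatFunc F :=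
      LinearMap.mulLeft F V ∘ₗ ϖ.toLinearMap + LinearMap.mulLeft F W ∘ₗ ϖ.symm.toLinearMap
    let z : RatFunc F →ₗ[F] RatFunc F :=
      LinearMap.mulLeft F (c q2⁻¹ * X⁻¹ * V) ∘ₗ ϖ.toLinearMap +
        LinearMap.mulLeft F (c q2⁻¹ * X * W) ∘ₗ ϖ.symm.toLinearMap
    q2 • (x ∘ₗ y) - q2⁻¹ • (y ∘ₗ x) = (q2 ^ 2 - (q2 ^ 2)⁻¹) • z :=
  skein_commutator_polynomial_rep_general F q2 t2 hq ϖ hϖ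
end

section
/- Let F = C(q^{1/2}, t^{1/2}) and define on F(X) the operator x = multiplication by X + X^{-1} and, for each integer k, the operator γ_k = q^{-k/2}X^{-k}V(X)ϖ + q^{-k/2}X^{k}V(X^{-1})ϖ^{-1}, where V(X) = (t^{1/2}X - t^{-1/2}X^{-1})/(X - X^{-1}) and (ϖf)(X) = f(qX). Then for every k, γ_{k-1} = (x·γ_k + γ_k·x)/(q^{1/2} + q^{-1/2}) - γ_{k+1}. -/
noncomputable section

/-- in the polynomial representation on `F(X)` (`F = ℂ(q^{1/2},t^{1/2})`,
here an arbitrary field containing `q2 = q^{1/2}` and `t2 = t^{1/2}` with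
`q^{1/2} + q^{-1/2} ≠ 0`), the operators
`γ_k = q^{-k/2}X^{-k}V(X)ϖ + q^{-k/2}X^{k}V(X⁻¹)ϖ⁻¹` and `x = X + X⁻¹` satisfy the
recursion `γ_{k-1} = (x·γ_k + γ_k·x)/(q^{1/2} + q^{-1/2}) - γ_{k+1}` for every `k ∈ ℤ`. -/
theorem gamma_recursion
    (F : Type*) [Field F] (q2 t2 : F) (hq : q2 ≠ 0) (ht : t2 ≠ 0)
    (hq2 : q2 + q2⁻¹ ≠ 0)
    (ϖ : RatFunc F ≃ₐ[F] RatFunc F)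
    (hϖ : ϖ RatFunc.X = algebraMap F (RatFunc F) (q2 ^ 2) * RatFunc.X) :
    let X : RatFunc F := RatFunc.X
    let c : F → RatFunc F := algebraMap F (RatFunc F)
    let V : RatFunc F := (c t2 * X - c t2⁻¹ * X⁻¹) / (X - X⁻¹)
    let W : RatFunc F := (c t2 * X⁻¹ - c t2⁻¹ * X) / (X⁻¹ - X)
    let x : RatFunc F →ₗ[F] RatFunc F := LinearMap.mulLeft F (X + X⁻¹)
    let γ : ℤ → (RatFunc F →ₗ[F] RatFunc F) := fun k =>
      LinearMap.mulLeft F (c q2 ^ (-k) * X ^ (-k) * V) ∘ₗ ϖ.toLinearMap +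
        LinearMap.mulLeft F (c q2 ^ (-k) * X ^ k * W) ∘ₗ ϖ.symm.toLinearMap
    ∀ k : ℤ, γ (k - 1) = (q2 + q2⁻¹)⁻¹ • (x ∘ₗ γ k + γ k ∘ₗ x) - γ (k + 1) := by
  intro X c V W x γ k
  clear_value V W
  have hX : X ≠ 0 := RatFunc.X_ne_zero
  set a : RatFunc F := c q2 with ha
  have hca : a ≠ 0 := (map_ne_zero (algebraMap F (RatFunc F))).mpr hq
  have hsum : a + a⁻¹ ≠ 0 := by
    have : a + a⁻¹ = c (q2 + q2⁻¹) := by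
      simp [ha, c, map_add, map_inv₀]
    rw [this]
    exact (map_ne_zero (algebraMap F (RatFunc F))).mpr hq2
  apply LinearMap.ext; intro f
  simp only [γ, x, LinearMap.sub_apply, LinearMap.add_apply, LinearMap.smul_apply,
    LinearMap.comp_apply, LinearMap.mulLeft_apply, AlgEquiv.toLinearMap_apply]
  have hc2 : c (q2 ^ 2) = a ^ 2 := by simp [ha, c, map_pow]
  have hϖX : ϖ X = a ^ 2 * X := by
    rw [hϖ]; show c (q2 ^ 2) * X = a ^ 2 * X; rw [hc2]
  have hϖsX : ϖ.symm X = (a ^ 2)⁻¹ * X := by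
    have h2 : a ^ 2 ≠ 0 := pow_ne_zero _ hca
    have : ϖ.symm (a ^ 2 * X) = a ^ 2 * ϖ.symm X := by
      have : ϖ.symm (a ^ 2) = a ^ 2 := by
        rw [← hc2]
        exact ϖ.symm.commutes _
      rw [map_mul, this]
    have h3 : X = a ^ 2 * ϖ.symm X := by
      rw [← this, ← hϖX, ϖ.symm_apply_apply]
    rw [eq_comm, inv_mul_eq_iff_eq_mul₀ h2]
    exact h3
  have h1 : ϖ ((X + X⁻¹) * f) = (a ^ 2 * X + (a ^ 2 * X)⁻¹) * ϖ f := by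
    rw [map_mul, map_add, map_inv₀, hϖX]
  have h2 : ϖ.symm ((X + X⁻¹) * f) = ((a ^ 2)⁻¹ * X + ((a ^ 2)⁻¹ * X)⁻¹) * ϖ.symm f := by
    rw [map_mul, map_add, map_inv₀, hϖsX]
  rw [h1, h2]
  -- zpow identities
  have ek1 : -(k - 1) = -k + 1 := by ring
  have ek2 : -(k + 1) = -k + -1 := by ring
  have ek3 : (k - 1 : ℤ) = k + -1 := by ring
  have hPa : a ^ (-(k-1)) = a ^ (-k) * a := by rw [ek1, zpow_add_one₀ hca]
  have hPa' : a ^ (-(k+1)) = a ^ (-k) * a⁻¹ := by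
    rw [ek2, zpow_add₀ hca, zpow_neg_one]
  have hXa : X ^ (-(k-1)) = X ^ (-k) * X := by rw [ek1, zpow_add_one₀ hX]
  have hXa' : X ^ (-(k+1)) = X ^ (-k) * X⁻¹ := by
    rw [ek2, zpow_add₀ hX, zpow_neg_one]
  have hXb : X ^ (k-1) = X ^ k * X⁻¹ := by
    rw [ek3, zpow_add₀ hX, zpow_neg_one]
  have hXb' : X ^ (k+1) = X ^ k * X := by rw [zpow_add_one₀ hX]
  rw [hPa, hPa', hXa, hXa', hXb, hXb']
  have hsmul : ∀ r : RatFunc F, (q2 + q2⁻¹)⁻¹ • r = (a + a⁻¹)⁻¹ * r := by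
    intro r
    rw [Algebra.smul_def, map_inv₀, map_add, map_inv₀]
  rw [hsmul]
  have key1 : (a + a⁻¹)⁻¹ * ((X + X⁻¹) + (a ^ 2 * X + (a ^ 2 * X)⁻¹)) = a * X + (a * X)⁻¹ := by
    rw [inv_mul_eq_iff_eq_mul₀ hsum]
    field_simp
    ring
  have key2 : (a + a⁻¹)⁻¹ * ((X + X⁻¹) + ((a ^ 2)⁻¹ * X + ((a ^ 2)⁻¹ * X)⁻¹))
      = a⁻¹ * X + a * X⁻¹ := by
    rw [inv_mul_eq_iff_eq_mul₀ hsum]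
    field_simp
    ring
  generalize ϖ f = u
  generalize ϖ.symm f = v
  generalize a ^ (-k : ℤ) = P
  generalize X ^ (-k : ℤ) = Q
  generalize X ^ (k : ℤ) = R
  linear_combination (-(P * Q * V * u)) * key1 - (P * R * W * v) * key2
end
end

section
/- Let F be a field of characteristic zero containing elements q, z with q not a root of unity, and let D̃ be the F-algebra generated by u^{±1} (representing w_1^{1/2} w_2^{-1/2}), D_1^{±1}, D_2^{±1} with relations [D_1,D_2]=0, D_1 u = q u D_1, D_2 u = q^{-1} u D_2. Then the assignment u ↦ X, D_1 ↦ -q^{-1} X^{-2} ϖ, D_2 ↦ -q^{-1} X^{2} ϖ^{-1} defines an F-algebra homomorphism from D̃/(D_1 D_2 - 1) to End F(X), where (ϖf)(X) = f(qX), and this homomorphism is injective. -/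
/-!
With `t = -q u² D₁` the relations give `t u = q u t`, and `D₁ = -q⁻¹ u⁻² t`, `D₂ = D₁⁻¹`, so the
quotient is a quantum torus: it is spanned by the monomials `u ^ a * t ^ b`, `a b : ℤ`. The
representation sends `t` to `ϖ`, hence `u ^ a * t ^ b` to the operator `X ^ a ϖ ^ b`. As `q` is
not a root of unity these operators are linearly independent over `F`, and a linear map sending a
spanning family to a linearly independent one is injective.
-/

noncomputable section

/-- Generators of `D̃`: `0 = u, 1 = u⁻¹, 2 = D₁, 3 = D₁⁻¹, 4 = D₂, 5 = D₂⁻¹`. -/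
def g9 (F : Type*) [Field F] (i : Fin 6) : FreeAlgebra F (Fin 6) := FreeAlgebra.ι F i

/-- The relations of `D̃/(D₁D₂ - 1)`: invertibility of the generators, `[D₁,D₂]=0`,
`D₁u = q·uD₁`, `D₂u = q⁻¹·uD₂`, and the quotient relation `D₁D₂ = 1`. -/
inductive Rel9 (F : Type*) [Field F] (q : F) :
    FreeAlgebra F (Fin 6) → FreeAlgebra F (Fin 6) → Prop
  | u_inv : Rel9 F q (g9 F 0 * g9 F 1) 1
  | inv_u : Rel9 F q (g9 F 1 * g9 F 0) 1
  | d1_inv : Rel9 F q (g9 F 2 * g9 F 3) 1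
  | inv_d1 : Rel9 F q (g9 F 3 * g9 F 2) 1
  | d2_inv : Rel9 F q (g9 F 4 * g9 F 5) 1
  | inv_d2 : Rel9 F q (g9 F 5 * g9 F 4) 1
  | comm : Rel9 F q (g9 F 2 * g9 F 4) (g9 F 4 * g9 F 2)
  | qcomm1 : Rel9 F q (g9 F 2 * g9 F 0)
      (algebraMap F (FreeAlgebra F (Fin 6)) q * (g9 F 0 * g9 F 2))
  | qcomm2 : Rel9 F q (g9 F 4 * g9 F 0)
      (algebraMap F (FreeAlgebra F (Fin 6)) q⁻¹ * (g9 F 0 * g9 F 4))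
  | quot : Rel9 F q (g9 F 2 * g9 F 4) 1

section QuantumTorus

theorem mul_zpow_eq_of_mul_eq_central {G : Type*} [Group G] {c x y : G}
    (hc : ∀ g, Commute c g) (h : x * y = c * y * x) (n : ℤ) :
    x * y ^ n = c ^ n * y ^ n * x := by
  rw [← (hc y).mul_zpow]
  exact SemiconjBy.zpow_right h n

theorem zpow_mul_zpow_eq_of_mul_eq_central {G : Type*} [Group G] {c x y : G}
    (hc : ∀ g, Commute c g) (h : x * y = c * y * x) (a b : ℤ) :
    x ^ b * y ^ a = c ^ (a * b) * y ^ a * x ^ b := by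
  have hxy := mul_zpow_eq_of_mul_eq_central hc h a
  have hyx : y ^ a * x = c ^ (-a) * x * y ^ a := by
    rw [mul_assoc, hxy, ← mul_assoc, ← mul_assoc, ← zpow_add, neg_add_cancel, zpow_zero,
      one_mul]
  rw [mul_assoc, mul_zpow_eq_of_mul_eq_central (fun g => (hc g).zpow_left (-a)) hyx b,
    ← zpow_mul, ← mul_assoc, ← mul_assoc, ← zpow_add, neg_mul, add_neg_cancel, zpow_zero, one_mul]

variable {F A : Type*} [Field F] [Ring A] [Algebra F A] {q : F} {u t : Aˣ}

theorem Units.zpow_mul_zpow_eq_smul (hq0 : q ≠ 0) (h : (t : A) * u = q • ((u : A) * t))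
    (a b : ℤ) :
    ((t ^ b : Aˣ) : A) * ↑(u ^ a) = q ^ (a * b) • (((u ^ a : Aˣ) : A) * ↑(t ^ b)) := by
  let c : Aˣ := Units.map (algebraMap F A : F →* A) (Units.mk0 q hq0)
  have hc : ∀ g, Commute c g := fun g => Units.ext (Algebra.commutes q (g : A))
  have hcoe : ∀ n : ℤ, ((c ^ n : Aˣ) : A) = algebraMap F A (q ^ n) := fun n => by
    rw [← map_zpow, Units.coe_map, MonoidHom.coe_coe, Units.val_zpow_eq_zpow_val, Units.val_mk0]
  have htu : t * u = c * u * t := Units.ext <| by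
    rw [Units.val_mul, h, Algebra.smul_def, Units.val_mul, Units.val_mul, mul_assoc]; rfl
  rw [← Units.val_mul, zpow_mul_zpow_eq_of_mul_eq_central hc htu, mul_assoc, Units.val_mul,
    hcoe, ← Algebra.smul_def, Units.val_mul]

variable (F) in
def quantumTorusSpan (u t : Aˣ) : Submodule F A :=
  Submodule.span F (Set.range fun p : ℤ × ℤ => ((u ^ p.1 * t ^ p.2 : Aˣ) : A))

theorem mul_mem_quantumTorusSpan (hq0 : q ≠ 0) (h : (t : A) * u = q • ((u : A) * t)) {x y : A}
    (hx : x ∈ quantumTorusSpan F u t) (hy : y ∈ quantumTorusSpan F u t) :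
    x * y ∈ quantumTorusSpan F u t := by
  suffices quantumTorusSpan F u t * quantumTorusSpan F u t ≤ quantumTorusSpan F u t from
    this (Submodule.mul_mem_mul hx hy)
  rw [quantumTorusSpan, Submodule.span_mul_span, Submodule.span_le]
  rintro _ ⟨_, ⟨⟨a, b⟩, rfl⟩, _, ⟨⟨a', b'⟩, rfl⟩, rfl⟩
  have hprod : ((u ^ a * t ^ b : Aˣ) : A) * ↑(u ^ a' * t ^ b') =
      q ^ (a' * b) • ((u ^ (a + a') * t ^ (b + b') : Aˣ) : A) := by
    simp only [Units.val_mul, zpow_add]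
    rw [mul_assoc, ← mul_assoc (t ^ b : Aˣ).val, Units.zpow_mul_zpow_eq_smul hq0 h]
    simp only [smul_mul_assoc, mul_smul_comm, mul_assoc]
  dsimp only
  rw [SetLike.mem_coe, hprod]
  exact Submodule.smul_mem _ _ (Submodule.subset_span ⟨(a + a', b + b'), rfl⟩)

def quantumTorusSubalgebra (hq0 : q ≠ 0) (h : (t : A) * u = q • ((u : A) * t)) :
    Subalgebra F A :=
  (quantumTorusSpan F u t).toSubalgebra (Submodule.subset_span ⟨(0, 0), by simp⟩)
    fun _ _ => mul_mem_quantumTorusSpan hq0 h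

end QuantumTorus

theorem zpow_injective_of_pow_ne_one {K : Type*} [GroupWithZero K] {q : K} (hq0 : q ≠ 0)
    (hq : ∀ n : ℕ, 0 < n → q ^ n ≠ 1) : Function.Injective fun n : ℤ => q ^ n := by
  have hfin : ¬IsOfFinOrder (Units.mk0 q hq0) := by
    rw [isOfFinOrder_iff_pow_eq_one]
    rintro ⟨n, hn, h⟩
    exact hq n hn (by simpa [Units.ext_iff] using h)
  intro a b hab
  exact injective_zpow_iff_not_isOfFinOrder.mpr hfin (Units.ext (by simpa using hab))

namespace RatFunc

variable {F : Type*} [Field F]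

open scoped LaurentSeries in
variable (F) in
theorem linearIndependent_X_zpow :
    LinearIndependent F fun k : ℤ => (X : RatFunc F) ^ k := by
  rw [linearIndependent_iff']
  intro s g hg i hi
  have hC : ∀ c : F, ((C c : RatFunc F) : F⸨X⸩) = HahnSeries.C c := fun c => by
    rw [← algebraMap_C, ← IsScalarTower.algebraMap_apply]
    simp
  have hcoeff := congrArg (fun f : RatFunc F => (f : F⸨X⸩).coeff i) hg
  simp only [map_sum, Algebra.smul_def, algebraMap_eq_C, map_mul, hC, map_zpow₀, coe_X,
    ← single_zpow, HahnSeries.C_apply, HahnSeries.single_mul_single, zero_add, mul_one,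
    HahnSeries.coeff_sum, HahnSeries.coeff_single] at hcoeff
  rw [Finset.sum_eq_single_of_mem i hi fun j _ hji => by simp [Ne.symm hji]] at hcoeff
  simpa using hcoeff

variable {q : F} {ϖ : RatFunc F ≃ₐ[F] RatFunc F}

theorem algEquiv_symm_apply_X (hq0 : q ≠ 0) (hϖ : ϖ X = algebraMap F (RatFunc F) q * X) :
    ϖ.symm X = algebraMap F (RatFunc F) q⁻¹ * X := by
  rw [ϖ.symm_apply_eq, map_mul, hϖ, AlgEquiv.commutes, ← mul_assoc, ← map_mul,
    inv_mul_cancel₀ hq0, map_one, one_mul]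

theorem algEquiv_zpow_apply_X (hq0 : q ≠ 0) (hϖ : ϖ X = algebraMap F (RatFunc F) q * X)
    (b : ℤ) : (ϖ ^ b) X = algebraMap F (RatFunc F) (q ^ b) * X := by
  induction b using Int.induction_on with
  | zero => simp
  | succ b ih =>
    rw [zpow_add_one, AlgEquiv.mul_apply, hϖ, map_mul, AlgEquiv.commutes, ih, ← mul_assoc,
      ← map_mul, zpow_add_one₀ hq0, mul_comm q]
  | pred b ih =>
    rw [zpow_sub_one, AlgEquiv.mul_apply, AlgEquiv.aut_inv, algEquiv_symm_apply_X hq0 hϖ,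
      map_mul, AlgEquiv.commutes, ih, ← mul_assoc, ← map_mul, zpow_sub_one₀ hq0, mul_comm q⁻¹]

/-- By Dedekind's lemma the distinct characters `ϖ ^ b` of `F(X)` are independent over `F(X)`,
while the `X ^ a` are independent over `F`. -/
theorem linearIndependent_mulLeft_X_zpow_comp_zpow (hq0 : q ≠ 0)
    (hq : Function.Injective fun n : ℤ => q ^ n) (hϖ : ϖ X = algebraMap F (RatFunc F) q * X) :
    LinearIndependent F fun p : ℤ × ℤ =>
      LinearMap.mulLeft F ((X : RatFunc F) ^ p.1) ∘ₗ (ϖ ^ p.2).toLinearMap := by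
  have hinj : Function.Injective fun b : ℤ =>
      ((ϖ ^ b : RatFunc F ≃ₐ[F] RatFunc F) : RatFunc F →* RatFunc F) := by
    intro b b' hbb'
    have hX := DFunLike.congr_fun hbb' X
    simp only [MonoidHom.coe_coe, algEquiv_zpow_apply_X hq0 hϖ] at hX
    exact hq ((algebraMap F (RatFunc F)).injective (mul_right_cancel₀ X_ne_zero hX))
  have hchars := (linearIndependent_monoidHom (RatFunc F) (RatFunc F)).comp _ hinj
  have hprod := linearIndependent_smul (R := F) (A := RatFunc F → RatFunc F)
    (linearIndependent_X_zpow F) hchars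
  refine .of_comp (LinearMap.ltoFun F (RatFunc F) (RatFunc F) F) ?_
  convert hprod using 1
  ext p f
  rfl

end RatFunc

section CoulombBranch

variable {F : Type*} [Field F] {q : F} {ϖ : RatFunc F ≃ₐ[F] RatFunc F}

variable (q ϖ) in
def coulombGen : Fin 6 → Module.End F (RatFunc F) :=
  let X : RatFunc F := RatFunc.X
  let c : F → RatFunc F := algebraMap F (RatFunc F)
  ![LinearMap.mulLeft F X, LinearMap.mulLeft F X⁻¹,
    LinearMap.mulLeft F (-(c q)⁻¹ * (X ^ 2)⁻¹) ∘ₗ ϖ.toLinearMap,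
    LinearMap.mulLeft F (-(c q)⁻¹ * X ^ 2) ∘ₗ ϖ.symm.toLinearMap,
    LinearMap.mulLeft F (-(c q)⁻¹ * X ^ 2) ∘ₗ ϖ.symm.toLinearMap,
    LinearMap.mulLeft F (-(c q)⁻¹ * (X ^ 2)⁻¹) ∘ₗ ϖ.toLinearMap]

theorem coulombGen_respects_rel (hq0 : q ≠ 0)
    (hϖ : ϖ RatFunc.X = algebraMap F (RatFunc F) q * RatFunc.X) ⦃x y : FreeAlgebra F (Fin 6)⦄
    (h : Rel9 F q x y) :
    FreeAlgebra.lift F (coulombGen q ϖ) x = FreeAlgebra.lift F (coulombGen q ϖ) y := by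
  have hq : RatFunc.C q ≠ 0 := by simpa using hq0
  have hX : (RatFunc.X : RatFunc F) ≠ 0 := RatFunc.X_ne_zero
  have hC : ∀ r, ϖ (RatFunc.C r) = RatFunc.C r := ϖ.commutes
  have hC' : ∀ r, ϖ.symm (RatFunc.C r) = RatFunc.C r := ϖ.symm.commutes
  cases h <;>
    refine LinearMap.ext fun f => ?_ <;>
    simp [g9, coulombGen, Module.End.mul_apply, Module.algebraMap_end_apply,
      RatFunc.smul_eq_C_mul, hϖ, RatFunc.algEquiv_symm_apply_X hq0 hϖ, hC, hC'] <;>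
    field_simp

def coulombRep (hq0 : q ≠ 0) (hϖ : ϖ RatFunc.X = algebraMap F (RatFunc F) q * RatFunc.X) :
    RingQuot (Rel9 F q) →ₐ[F] Module.End F (RatFunc F) :=
  RingQuot.liftAlgHom F ⟨FreeAlgebra.lift F (coulombGen q ϖ), coulombGen_respects_rel hq0 hϖ⟩

theorem coulombRep_mkAlgHom_g9 (hq0 : q ≠ 0)
    (hϖ : ϖ RatFunc.X = algebraMap F (RatFunc F) q * RatFunc.X) (i : Fin 6) :
    coulombRep hq0 hϖ (RingQuot.mkAlgHom F (Rel9 F q) (g9 F i)) = coulombGen q ϖ i := by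
  rw [coulombRep, RingQuot.liftAlgHom_mkAlgHom_apply, g9, FreeAlgebra.lift_ι_apply]

theorem mkAlgHom_g9_mul_eq_one {i j : Fin 6} (h : Rel9 F q (g9 F i * g9 F j) 1) :
    RingQuot.mkAlgHom F (Rel9 F q) (g9 F i) * RingQuot.mkAlgHom F (Rel9 F q) (g9 F j) = 1 := by
  simpa using RingQuot.mkAlgHom_rel F h

variable (F q) in
def coulombU : (RingQuot (Rel9 F q))ˣ :=
  ⟨_, _, mkAlgHom_g9_mul_eq_one .u_inv, mkAlgHom_g9_mul_eq_one .inv_u⟩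

variable (F q) in
def coulombD : (RingQuot (Rel9 F q))ˣ :=
  ⟨_, _, mkAlgHom_g9_mul_eq_one .d1_inv, mkAlgHom_g9_mul_eq_one .inv_d1⟩

theorem mkAlgHom_g9_four :
    RingQuot.mkAlgHom F (Rel9 F q) (g9 F 4) = ((coulombD F q)⁻¹ : (RingQuot (Rel9 F q))ˣ) :=
  (Units.inv_eq_of_mul_eq_one_right (mkAlgHom_g9_mul_eq_one .quot)).symm

theorem mkAlgHom_g9_five :
    RingQuot.mkAlgHom F (Rel9 F q) (g9 F 5) = (coulombD F q : RingQuot (Rel9 F q)) := by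
  have h := mkAlgHom_g9_mul_eq_one (F := F) (q := q) .d2_inv
  rw [mkAlgHom_g9_four] at h
  simpa using (Units.inv_eq_of_mul_eq_one_right h).symm

theorem coulombD_mul_coulombU :
    (coulombD F q : RingQuot (Rel9 F q)) * coulombU F q =
      q • ((coulombU F q : RingQuot (Rel9 F q)) * coulombD F q) := by
  simpa [Algebra.smul_def, coulombU, coulombD] using
    RingQuot.mkAlgHom_rel F (Rel9.qcomm1 (F := F) (q := q))

def coulombShift (hq0 : q ≠ 0) : (RingQuot (Rel9 F q))ˣ :=
  Units.map (algebraMap F (RingQuot (Rel9 F q)) : F →* RingQuot (Rel9 F q))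
    (Units.mk0 (-q) (neg_ne_zero.mpr hq0)) * coulombU F q ^ 2 * coulombD F q

theorem coulombShift_val (hq0 : q ≠ 0) :
    (coulombShift hq0 : RingQuot (Rel9 F q)) =
      (-q) • ((coulombU F q : RingQuot (Rel9 F q)) ^ 2 * coulombD F q) := by
  simp [coulombShift, Algebra.smul_def, mul_assoc]

theorem coulombShift_mul_coulombU (hq0 : q ≠ 0) :
    (coulombShift hq0 : RingQuot (Rel9 F q)) * coulombU F q =
      q • ((coulombU F q : RingQuot (Rel9 F q)) * coulombShift hq0) := by
  rw [coulombShift_val, smul_mul_assoc, mul_assoc, coulombD_mul_coulombU, mul_smul_comm,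
    mul_smul_comm, smul_comm, ← mul_assoc, ← mul_assoc, ← pow_succ, ← pow_succ']

theorem quantumTorusSpan_coulomb_eq_top (hq0 : q ≠ 0) :
    quantumTorusSpan F (coulombU F q) (coulombShift hq0) = ⊤ := by
  let S := quantumTorusSubalgebra hq0 (coulombShift_mul_coulombU hq0)
  have hmem : ∀ a b : ℤ,
      ((coulombU F q ^ a * coulombShift hq0 ^ b : _ˣ) : RingQuot (Rel9 F q)) ∈ S :=
    fun a b => Submodule.subset_span ⟨(a, b), rfl⟩
  have hU : coulombU F q ∈ S.toSubmonoid.units :=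
    ⟨by simpa using hmem 1 0, by simpa using hmem (-1) 0⟩
  have hT : coulombShift hq0 ∈ S.toSubmonoid.units :=
    ⟨by simpa using hmem 0 1, by simpa using hmem 0 (-1)⟩
  have hc : ∀ r : F, ∀ hr : r ≠ 0, Units.map (algebraMap F (RingQuot (Rel9 F q)) : F →* _)
      (Units.mk0 r hr) ∈ S.toSubmonoid.units := fun r hr =>
    ⟨S.algebraMap_mem r, by simp [S.algebraMap_mem r⁻¹]⟩
  have hD : coulombD F q ∈ S.toSubmonoid.units := by
    rw [← inv_mul_cancel_left (Units.map (algebraMap F (RingQuot (Rel9 F q)) : F →* _)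
      (Units.mk0 (-q) (neg_ne_zero.mpr hq0)) * coulombU F q ^ 2) (coulombD F q)]
    exact mul_mem (inv_mem (mul_mem (hc _ _) (pow_mem hU 2))) hT
  suffices ∀ y, RingQuot.mkAlgHom F (Rel9 F q) y ∈ S by
    rw [eq_top_iff]
    rintro x -
    obtain ⟨y, rfl⟩ := RingQuot.mkAlgHom_surjective F (Rel9 F q) x
    exact this y
  intro y
  induction y using FreeAlgebra.induction with
  | grade0 r => rw [AlgHom.commutes]; exact S.algebraMap_mem r
  | grade1 i =>
    fin_cases i
    exacts [hU.1, hU.2, hD.1, hD.2, mkAlgHom_g9_four (F := F) ▸ hD.2,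
      mkAlgHom_g9_five (F := F) ▸ hD.1]
  | mul a b ha hb => rw [map_mul]; exact S.mul_mem ha hb
  | add a b ha hb => rw [map_add]; exact S.add_mem ha hb

theorem coulombRep_coulombShift (hq0 : q ≠ 0)
    (hϖ : ϖ RatFunc.X = algebraMap F (RatFunc F) q * RatFunc.X) :
    coulombRep hq0 hϖ (coulombShift hq0) = ϖ.toLinearMap := by
  rw [coulombShift_val, map_smul, map_mul, map_pow, coulombU, coulombD, Units.val_mk,
    Units.val_mk, coulombRep_mkAlgHom_g9, coulombRep_mkAlgHom_g9]
  have hq : RatFunc.C q ≠ 0 := by simpa using hq0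
  have hX : (RatFunc.X : RatFunc F) ≠ 0 := RatFunc.X_ne_zero
  ext f
  simp [coulombGen, Module.End.mul_apply, RatFunc.smul_eq_C_mul]
  field_simp

theorem coulombRep_monomial (hq0 : q ≠ 0)
    (hϖ : ϖ RatFunc.X = algebraMap F (RatFunc F) q * RatFunc.X) (a b : ℤ) :
    coulombRep hq0 hϖ ((coulombU F q ^ a * coulombShift hq0 ^ b : _ˣ) : RingQuot (Rel9 F q)) =
      LinearMap.mulLeft F ((RatFunc.X : RatFunc F) ^ a) ∘ₗ (ϖ ^ b).toLinearMap := by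
  let φ : RingQuot (Rel9 F q) →* Module.End F (RatFunc F) := coulombRep hq0 hϖ
  have hU : Units.map φ (coulombU F q) = Units.map (Algebra.lmul F (RatFunc F) : RatFunc F →* _)
      (Units.mk0 RatFunc.X RatFunc.X_ne_zero) :=
    Units.ext (coulombRep_mkAlgHom_g9 hq0 hϖ 0)
  have hT : Units.map φ (coulombShift hq0) =
      (AlgEquiv.toLinearMapHom F (RatFunc F)).toHomUnits ϖ :=
    Units.ext (coulombRep_coulombShift hq0 hϖ)
  calc φ ((coulombU F q ^ a * coulombShift hq0 ^ b : _ˣ) : RingQuot (Rel9 F q))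
      = ((Units.map φ (coulombU F q ^ a * coulombShift hq0 ^ b) : _ˣ) :
          Module.End F (RatFunc F)) := rfl
    _ = ((Units.map (Algebra.lmul F (RatFunc F) : RatFunc F →* _)
          (Units.mk0 RatFunc.X RatFunc.X_ne_zero ^ a) *
          (AlgEquiv.toLinearMapHom F (RatFunc F)).toHomUnits (ϖ ^ b) : _ˣ) :
            Module.End F (RatFunc F)) := by
      rw [map_mul, map_zpow, map_zpow, hU, hT, ← map_zpow, ← map_zpow]
    _ = _ := by
      rw [Units.val_mul, Units.coe_map, MonoidHom.coe_toHomUnits, Units.val_zpow_eq_zpow_val,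
        Units.val_mk0]
      rfl

end CoulombBranch

theorem coulomb_embedding_injective_general
    (F : Type*) [Field F] (q : F) (hq0 : q ≠ 0)
    (hq : ∀ n : ℕ, 0 < n → q ^ n ≠ 1)
    (ϖ : RatFunc F ≃ₐ[F] RatFunc F)
    (hϖ : ϖ RatFunc.X = algebraMap F (RatFunc F) q * RatFunc.X) :
    let X : RatFunc F := RatFunc.X
    let c : F → RatFunc F := algebraMap F (RatFunc F)
    let mk : FreeAlgebra F (Fin 6) →ₐ[F] RingQuot (Rel9 F q) :=
      RingQuot.mkAlgHom F (Rel9 F q)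
    ∃ φ : RingQuot (Rel9 F q) →ₐ[F] Module.End F (RatFunc F),
      Function.Injective φ ∧
      φ (mk (g9 F 0)) = LinearMap.mulLeft F X ∧
      φ (mk (g9 F 1)) = LinearMap.mulLeft F X⁻¹ ∧
      φ (mk (g9 F 2)) = LinearMap.mulLeft F (-(c q)⁻¹ * (X ^ 2)⁻¹) ∘ₗ ϖ.toLinearMap ∧
      φ (mk (g9 F 4)) = LinearMap.mulLeft F (-(c q)⁻¹ * X ^ 2) ∘ₗ ϖ.symm.toLinearMap := by
  intro X c mk
  refine ⟨coulombRep hq0 hϖ, ?_, coulombRep_mkAlgHom_g9 hq0 hϖ 0,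
    coulombRep_mkAlgHom_g9 hq0 hϖ 1, coulombRep_mkAlgHom_g9 hq0 hϖ 2,
    coulombRep_mkAlgHom_g9 hq0 hϖ 4⟩
  have hli := RatFunc.linearIndependent_mulLeft_X_zpow_comp_zpow hq0
    (zpow_injective_of_pow_ne_one hq0 hq) hϖ
  refine (coulombRep hq0 hϖ).toLinearMap.injective_of_linearIndependent
    (quantumTorusSpan_coulomb_eq_top hq0) ?_
  simpa only [Function.comp_def, AlgHom.toLinearMap_apply, coulombRep_monomial] using hli

/-- for a field `F` of characteristic zero containing `q, z` with `q` not
a root of unity, the assignment `u ↦ X`, `D₁ ↦ -q⁻¹X⁻²ϖ`, `D₂ ↦ -q⁻¹X²ϖ⁻¹` defines an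
injective `F`-algebra homomorphism `D̃/(D₁D₂ - 1) → End_F F(X)`, where `ϖ(X) = qX`. -/
theorem coulomb_embedding_injective
    (F : Type*) [Field F] [CharZero F] (q z : F) (hq0 : q ≠ 0)
    (hq : ∀ n : ℕ, 0 < n → q ^ n ≠ 1)
    (ϖ : RatFunc F ≃ₐ[F] RatFunc F)
    (hϖ : ϖ RatFunc.X = algebraMap F (RatFunc F) q * RatFunc.X) :
    let X : RatFunc F := RatFunc.X
    let c : F → RatFunc F := algebraMap F (RatFunc F)
    let mk : FreeAlgebra F (Fin 6) →ₐ[F] RingQuot (Rel9 F q) :=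
      RingQuot.mkAlgHom F (Rel9 F q)
    ∃ φ : RingQuot (Rel9 F q) →ₐ[F] Module.End F (RatFunc F),
      Function.Injective φ ∧
      φ (mk (g9 F 0)) = LinearMap.mulLeft F X ∧
      φ (mk (g9 F 1)) = LinearMap.mulLeft F X⁻¹ ∧
      φ (mk (g9 F 2)) = LinearMap.mulLeft F (-(c q)⁻¹ * (X ^ 2)⁻¹) ∘ₗ ϖ.toLinearMap ∧
      φ (mk (g9 F 4)) = LinearMap.mulLeft F (-(c q)⁻¹ * X ^ 2) ∘ₗ ϖ.symm.toLinearMap :=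
  coulomb_embedding_injective_general F q hq0 hq ϖ hϖ
end
end

section
/- In the double affine Hecke algebra H_{q,t}(A_1), the assignments τ_+: X ↦ X, Y ↦ q^{-1/2}XY, T ↦ T extend to a well-defined algebra automorphism; that is, the images q^{-1/2}XY of Y and X of X, together with T, satisfy the four defining relations TXT = X^{-1}, T(q^{-1/2}XY)^{-1}T = q^{-1/2}XY, (q^{-1/2}XY)^{-1}X^{-1}(q^{-1/2}XY)XT^2 = q^{-1}, (T - t^{1/2})(T + t^{-1/2}) = 0. -/
/-!
The relation `Y⁻¹X⁻¹YXT² = q⁻²` says `YXT² = q⁻²XY`, and `TXT = X⁻¹` turns `TY⁻¹X⁻¹T` into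
`(TY⁻¹T)XT² = YXT²`. Hence `T(q·Y⁻¹X⁻¹)T = q·q⁻²XY = q⁻¹XY`, which is the second relation for
the images. In the third relation the scalars `q` and `q⁻¹` cancel and so do the adjacent
`X⁻¹X`, leaving the original relation; the first and fourth relations are untouched.
-/

section Monoid

variable {M : Type*} [Monoid M]

theorem mul_mul_mul_eq_one {x xi y yi : M} (hx : x * xi = 1) (hy : y * yi = 1) :
    x * y * (yi * xi) = 1 := by
  rw [mul_assoc, ← mul_assoc y, hy, one_mul, hx]

theorem eq_mul_of_mul_eq_one_of_mul_eq {a b w z : M} (hab : a * b = 1) (h : b * w = z) :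
    w = a * z := by
  rw [← h, ← mul_assoc, hab, one_mul]

end Monoid

namespace DAHA

theorem T_mul_Yinv_mul_Xinv_mul_T {M : Type*} [Monoid M] {T X Xi Y Yi : M} (rel1 : T * X * T = Xi)
    (rel2 : T * Yi * T = Y) : T * (Yi * Xi) * T = Y * X * T ^ 2 := by
  rw [← rel1, ← rel2, sq]
  simp only [mul_assoc]

section Algebra

variable {F A : Type*} [Semifield F] [Semiring A] [Algebra F A] {q : F} {T X Xi Y Yi : A}

theorem Y_mul_X_mul_T_sq {c : F} (hX : X * Xi = 1) (hY : Y * Yi = 1)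
    (rel3 : Yi * Xi * Y * X * T ^ 2 = algebraMap F A c) :
    Y * X * T ^ 2 = c • (X * Y) := by
  have rel3' : Yi * Xi * (Y * X * T ^ 2) = algebraMap F A c := by
    simpa only [mul_assoc] using rel3
  rw [eq_mul_of_mul_eq_one_of_mul_eq (mul_mul_mul_eq_one hX hY) rel3', ← Algebra.commutes,
    Algebra.smul_def]

theorem tauPlus_Y_mul_Yinv (hq : q ≠ 0) (hX : X * Xi = 1) (hY : Y * Yi = 1) :
    q⁻¹ • (X * Y) * q • (Yi * Xi) = 1 := by
  rw [smul_mul_smul_comm, inv_mul_cancel₀ hq, one_smul, mul_mul_mul_eq_one hX hY]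

theorem tauPlus_Yinv_mul_Y (hq : q ≠ 0) (hX' : Xi * X = 1) (hY' : Yi * Y = 1) :
    q • (Yi * Xi) * q⁻¹ • (X * Y) = 1 := by
  rw [smul_mul_smul_comm, mul_inv_cancel₀ hq, one_smul, mul_mul_mul_eq_one hY' hX']

theorem tauPlus_T_mul_Yinv_mul_T (hq : q ≠ 0) (hX : X * Xi = 1) (hY : Y * Yi = 1)
    (rel1 : T * X * T = Xi) (rel2 : T * Yi * T = Y)
    (rel3 : Yi * Xi * Y * X * T ^ 2 = algebraMap F A (q ^ 2)⁻¹) :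
    T * q • (Yi * Xi) * T = q⁻¹ • (X * Y) := by
  rw [mul_smul_comm, smul_mul_assoc, T_mul_Yinv_mul_Xinv_mul_T rel1 rel2,
    Y_mul_X_mul_T_sq hX hY rel3, smul_smul, sq, mul_inv, ← mul_assoc, mul_inv_cancel₀ hq,
    one_mul]

theorem tauPlus_third_relation (hq : q ≠ 0) (hX' : Xi * X = 1) :
    q • (Yi * Xi) * Xi * q⁻¹ • (X * Y) * X * T ^ 2 = Yi * Xi * Y * X * T ^ 2 := by
  simp only [smul_mul_assoc, mul_smul_comm, smul_smul, inv_mul_cancel₀ hq, one_smul, mul_assoc]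
  rw [← mul_assoc Xi X, hX', one_mul]

end Algebra

end DAHA

open DAHA in
theorem tau_plus_automorphism_general
    (F : Type*) [Field F] (A : Type*) [Ring A] [Algebra F A]
    (q2 t2 : F) (hq : q2 ≠ 0)
    (T X Xi Y Yi : A)
    (hX : X * Xi = 1) (hX' : Xi * X = 1) (hY : Y * Yi = 1) (hY' : Yi * Y = 1)
    (rel1 : T * X * T = Xi)
    (rel2 : T * Yi * T = Y)
    (rel3 : Yi * Xi * Y * X * T ^ 2 = algebraMap F A (q2 ^ 2)⁻¹)
    (rel4 : (T - algebraMap F A t2) * (T + algebraMap F A t2⁻¹) = 0) :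
    let Y' : A := algebraMap F A q2⁻¹ * X * Y
    let Yi' : A := algebraMap F A q2 * Yi * Xi
    Y' * Yi' = 1 ∧ Yi' * Y' = 1 ∧
      T * X * T = Xi ∧
      T * Yi' * T = Y' ∧
      Yi' * Xi * Y' * X * T ^ 2 = algebraMap F A (q2 ^ 2)⁻¹ ∧
      (T - algebraMap F A t2) * (T + algebraMap F A t2⁻¹) = 0 := by
  intro Y' Yi'
  have hY'_eq : Y' = q2⁻¹ • (X * Y) := by rw [Algebra.smul_def, ← mul_assoc]
  have hYi'_eq : Yi' = q2 • (Yi * Xi) := by rw [Algebra.smul_def, ← mul_assoc]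
  rw [hY'_eq, hYi'_eq]
  exact ⟨tauPlus_Y_mul_Yinv hq hX hY, tauPlus_Yinv_mul_Y hq hX' hY', rel1,
    tauPlus_T_mul_Yinv_mul_T hq hX hY rel1 rel2 rel3,
    (tauPlus_third_relation hq hX').trans rel3, rel4⟩

/-- in the double affine Hecke algebra `H_{q,t}(A₁)` the assignments
`τ₊ : X ↦ X, Y ↦ q^{-1/2}XY, T ↦ T` extend to an algebra automorphism: the images
`X`, `Y' = q^{-1/2}XY` (with inverse `Y'⁻¹ = q^{1/2}Y⁻¹X⁻¹`) and `T` satisfy the four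
defining relations of the DAHA. -/
theorem tau_plus_automorphism
    (F : Type*) [Field F] (A : Type*) [Ring A] [Algebra F A]
    (q2 t2 : F) (hq : q2 ≠ 0) (ht : t2 ≠ 0)
    (T X Xi Y Yi : A)
    (hX : X * Xi = 1) (hX' : Xi * X = 1) (hY : Y * Yi = 1) (hY' : Yi * Y = 1)
    (rel1 : T * X * T = Xi)
    (rel2 : T * Yi * T = Y)
    (rel3 : Yi * Xi * Y * X * T ^ 2 = algebraMap F A (q2 ^ 2)⁻¹)
    (rel4 : (T - algebraMap F A t2) * (T + algebraMap F A t2⁻¹) = 0) :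
    let Y' : A := algebraMap F A q2⁻¹ * X * Y
    let Yi' : A := algebraMap F A q2 * Yi * Xi
    Y' * Yi' = 1 ∧ Yi' * Y' = 1 ∧
      T * X * T = Xi ∧
      T * Yi' * T = Y' ∧
      Yi' * Xi * Y' * X * T ^ 2 = algebraMap F A (q2 ^ 2)⁻¹ ∧
      (T - algebraMap F A t2) * (T + algebraMap F A t2⁻¹) = 0 :=
  tau_plus_automorphism_general F A q2 t2 hq T X Xi Y Yi hX hX' hY hY' rel1 rel2 rel3 rel4
end

section
/- In the double affine Hecke algebra H_{q,t}(A_1), the assignments σ: X ↦ Y^{-1}, Y ↦ XT^2, T ↦ T extend to a well-defined algebra automorphism, i.e. the elements Y^{-1}, XT^2, T satisfy the defining relations of H_{q,t}(A_1). -/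
/-- in the double affine Hecke algebra `H_{q,t}(A₁)` the assignments
`σ : X ↦ Y⁻¹, Y ↦ XT², T ↦ T` extend to an algebra automorphism: the elements
`X' = Y⁻¹` (with inverse `Y`) and `Y' = XT²` (which is invertible) together with `T`
satisfy the defining relations of the DAHA. -/
theorem sigma_automorphism
    (F : Type*) [Field F] (A : Type*) [Ring A] [Algebra F A]
    (q2 t2 : F) (hq : q2 ≠ 0) (ht : t2 ≠ 0)
    (T X Xi Y Yi : A)
    (hX : X * Xi = 1) (hX' : Xi * X = 1) (hY : Y * Yi = 1) (hY' : Yi * Y = 1)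
    (rel1 : T * X * T = Xi)
    (rel2 : T * Yi * T = Y)
    (rel3 : Yi * Xi * Y * X * T ^ 2 = algebraMap F A (q2 ^ 2)⁻¹)
    (rel4 : (T - algebraMap F A t2) * (T + algebraMap F A t2⁻¹) = 0) :
    let X' : A := Yi
    let Xi' : A := Y
    let Y' : A := X * T ^ 2
    ∃ Yi' : A,
      Y' * Yi' = 1 ∧ Yi' * Y' = 1 ∧
      X' * Xi' = 1 ∧ Xi' * X' = 1 ∧
      T * X' * T = Xi' ∧
      T * Yi' * T = Y' ∧
      Yi' * Xi' * Y' * X' * T ^ 2 = algebraMap F A (q2 ^ 2)⁻¹ ∧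
      (T - algebraMap F A t2) * (T + algebraMap F A t2⁻¹) = 0 := by
  intro X' Xi' Y'
  set a := algebraMap F A t2 with ha
  set b := algebraMap F A t2⁻¹ with hb
  set c := algebraMap F A (q2 ^ 2)⁻¹ with hc
  have hab : a * b = 1 := by
    rw [ha, hb, ← map_mul, mul_inv_cancel₀ ht, map_one]
  have e1 : T * T + T * b - T * a - 1 = 0 := by
    have hca : a * T = T * a := Algebra.commutes t2 T
    calc T * T + T * b - T * a - 1
        = (T - a) * (T + b) + (a * T - T * a) + (a * b - 1) := by noncomm_ring
      _ = 0 := by rw [rel4, hca, hab]; abel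
  set Ti := T + b - a with hTidef
  have hT1 : T * Ti = 1 := by
    calc T * Ti = (T * T + T * b - T * a - 1) + 1 := by rw [hTidef]; noncomm_ring
      _ = 1 := by rw [e1]; abel
  have hT2 : Ti * T = 1 := by
    have hca : a * T = T * a := Algebra.commutes t2 T
    have hcb : b * T = T * b := Algebra.commutes t2⁻¹ T
    calc Ti * T
        = (T * T + T * b - T * a - 1) + 1 + (b * T - T * b) - (a * T - T * a) := by
          rw [hTidef]; noncomm_ring
      _ = 1 := by rw [e1, hca, hcb]; abel
  have mT : ∀ z : A, T * (Ti * z) = z := fun z => by rw [← mul_assoc, hT1, one_mul]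
  have mTi : ∀ z : A, Ti * (T * z) = z := fun z => by rw [← mul_assoc, hT2, one_mul]
  have mX : ∀ z : A, X * (Xi * z) = z := fun z => by rw [← mul_assoc, hX, one_mul]
  have mXi : ∀ z : A, Xi * (X * z) = z := fun z => by rw [← mul_assoc, hX', one_mul]
  have mY : ∀ z : A, Y * (Yi * z) = z := fun z => by rw [← mul_assoc, hY, one_mul]
  have mYi : ∀ z : A, Yi * (Y * z) = z := fun z => by rw [← mul_assoc, hY', one_mul]
  have hXT : X * T = Ti * Xi := by
    have r1 : T * (X * T) = Xi := by rw [← mul_assoc]; exact rel1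
    calc X * T = Ti * (T * (X * T)) := (mTi (X * T)).symm
      _ = Ti * Xi := by rw [r1]
  refine ⟨Ti * Ti * Xi, ?_, ?_, hY', hY, rel2, ?_, ?_, rel4⟩
  · calc X * T ^ 2 * (Ti * Ti * Xi)
        = X * (T * (T * (Ti * (Ti * Xi)))) := by noncomm_ring
      _ = 1 := by rw [mT, mT, hX]
  · calc Ti * Ti * Xi * (X * T ^ 2)
        = Ti * (Ti * (Xi * (X * (T * T)))) := by noncomm_ring
      _ = 1 := by rw [mXi, mTi, hT2]
  · calc T * (Ti * Ti * Xi) * T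
        = T * (Ti * (Ti * (Xi * T))) := by noncomm_ring
      _ = Ti * (Xi * T) := mT _
      _ = (Ti * Xi) * T := by rw [mul_assoc]
      _ = (X * T) * T := by rw [hXT]
      _ = X * T ^ 2 := by noncomm_ring
  · have r3' : Xi * Y * X * T ^ 2 = Y * c := by
      calc Xi * Y * X * T ^ 2
          = Y * (Yi * (Xi * Y * X * T ^ 2)) := (mY _).symm
        _ = Y * (Yi * Xi * Y * X * T ^ 2) := by rw [show Yi * (Xi * Y * X * T ^ 2)
              = Yi * Xi * Y * X * T ^ 2 from by noncomm_ring]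
        _ = Y * c := by rw [rel3]
    have hcen : ∀ z : A, c * z = z * c := fun z => Algebra.commutes _ z
    calc Ti * Ti * Xi * Y * (X * T ^ 2) * Yi * T ^ 2
        = Ti * (Ti * ((Xi * Y * X * T ^ 2) * (Yi * (T * T)))) := by noncomm_ring
      _ = Ti * (Ti * ((Y * c) * (Yi * (T * T)))) := by rw [r3']
      _ = Ti * (Ti * (Y * (Yi * (T * (T * c))))) := by
            rw [mul_assoc, hcen]; noncomm_ring
      _ = c := by rw [mY, mTi, mTi]
end

section
/- Let F = C(q^{1/2}, t^{1/2}), and consider the operators on F(X): x = multiplication by X + X^{-1}, and for k ∈ Z, γ_k = q^{-k/2} X^{-k} V(X) ϖ + q^{-k/2} X^{k} V(X^{-1}) ϖ^{-1}, where V(X) = (t^{1/2}X - t^{-1/2}X^{-1})/(X - X^{-1}) and (ϖ f)(X) = f(qX). Then each of x and γ_k preserves the subring F[X^{±1}]^{Z_2} of symmetric Laurent polynomials (invariant under X ↦ X^{-1}). -/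
noncomputable section
namespace GammaAux
variable (F : Type*) [Field F]

lemma hXXne : (RatFunc.X : RatFunc F) - RatFunc.X⁻¹ ≠ 0 := by
  intro h
  rw [sub_eq_zero] at h
  have h2 : (RatFunc.X : RatFunc F) * RatFunc.X = 1 := by
    nth_rewrite 2 [h]; exact mul_inv_cancel₀ RatFunc.X_ne_zero
  have := congrArg RatFunc.intDegree h2
  rw [RatFunc.intDegree_mul RatFunc.X_ne_zero RatFunc.X_ne_zero,
    RatFunc.intDegree_X, RatFunc.intDegree_one] at this
  norm_num at this

def Sspan : Submodule F (RatFunc F) :=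
  Submodule.span F ({1} ∪ Set.range (fun n : ℕ =>
    (RatFunc.X : RatFunc F) ^ (n : ℤ) + RatFunc.X ^ (-(n : ℤ))))

variable {F}

lemma E_mem (m : ℤ) : (RatFunc.X : RatFunc F) ^ m + RatFunc.X ^ (-m) ∈ Sspan F := by
  rcases le_or_gt 0 m with hm | hm
  · exact Submodule.subset_span (Or.inr ⟨m.toNat, by simp [Int.toNat_of_nonneg hm]⟩)
  · apply Submodule.subset_span
    refine Or.inr ⟨(-m).toNat, ?_⟩
    have h : ((-m).toNat : ℤ) = -m := Int.toNat_of_nonneg (by omega)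
    simp only [h, neg_neg]
    rw [add_comm]

def D (m : ℤ) : RatFunc F :=
  (RatFunc.X ^ m - RatFunc.X ^ (-m)) / (RatFunc.X - RatFunc.X⁻¹)

lemma D_neg (m : ℤ) : (D (-m) : RatFunc F) = - D m := by
  rw [D, D, neg_neg, ← neg_div, neg_sub]

lemma D_rec (m : ℤ) :
    (D (m + 2) : RatFunc F) = (RatFunc.X ^ (m+1) + RatFunc.X ^ (-(m+1))) + D m := by
  have hX : (RatFunc.X : RatFunc F) ≠ 0 := RatFunc.X_ne_zero
  have key : (RatFunc.X : RatFunc F) ^ (m+2) - RatFunc.X ^ (-(m+2)) =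
      (RatFunc.X ^ (m+1) + RatFunc.X ^ (-(m+1))) * (RatFunc.X - RatFunc.X⁻¹) +
      (RatFunc.X ^ m - RatFunc.X ^ (-m)) := by
    have e1 : (RatFunc.X : RatFunc F) ^ (m + 2) = RatFunc.X ^ m * (RatFunc.X * RatFunc.X) := by
      rw [zpow_add₀ hX, show (2:ℤ) = 1 + 1 by norm_num, zpow_add₀ hX, zpow_one]
    have e2 : (RatFunc.X : RatFunc F) ^ (-(m + 2)) =
        RatFunc.X ^ (-m) * (RatFunc.X⁻¹ * RatFunc.X⁻¹) := by
      rw [show -(m+2) = -m + (-1 + -1) by ring, zpow_add₀ hX, zpow_add₀ hX, zpow_neg_one]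
    have e3 : (RatFunc.X : RatFunc F) ^ (m + 1) = RatFunc.X ^ m * RatFunc.X := by
      rw [zpow_add₀ hX, zpow_one]
    have e4 : (RatFunc.X : RatFunc F) ^ (-(m + 1)) = RatFunc.X ^ (-m) * RatFunc.X⁻¹ := by
      rw [show -(m+1) = -m + -1 by ring, zpow_add₀ hX, zpow_neg_one]
    have e5 : (RatFunc.X : RatFunc F) ^ m * RatFunc.X ^ (-m) = 1 := by
      rw [← zpow_add₀ hX]; simp
    have e6 : (RatFunc.X : RatFunc F) * RatFunc.X⁻¹ = 1 := mul_inv_cancel₀ hX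
    rw [e1, e2, e3, e4]
    generalize (RatFunc.X : RatFunc F) ^ m = a at e5 ⊢
    generalize (RatFunc.X : RatFunc F) ^ (-m) = b at e5 ⊢
    linear_combination (a - b) * e6
  rw [D, D, key, add_div, mul_div_cancel_right₀ _ (hXXne F)]

lemma D_mem : ∀ m : ℤ, (D m : RatFunc F) ∈ Sspan F := by
  have H : ∀ n : ℕ, (D (n:ℤ) : RatFunc F) ∈ Sspan F ∧ (D ((n:ℤ)+1) : RatFunc F) ∈ Sspan F := by
    intro n
    induction n with
    | zero =>
      refine ⟨by rw [D]; simp, ?_⟩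
      rw [show ((0:ℕ):ℤ) + 1 = 1 by norm_num, D]
      simp only [zpow_one, zpow_neg_one]
      rw [div_self (hXXne F)]
      exact Submodule.subset_span (Or.inl rfl)
    | succ k ih =>
      refine ⟨by exact_mod_cast ih.2, ?_⟩
      have h2 : ((k+1:ℕ):ℤ) + 1 = (k:ℤ) + 2 := by push_cast; ring
      rw [h2, D_rec]
      exact (Sspan F).add_mem (E_mem _) ih.1
  intro m
  rcases le_or_gt 0 m with hm | hm
  · have := (H m.toNat).1
    rwa [Int.toNat_of_nonneg hm] at this
  · have := (H (-m).toNat).1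
    rw [Int.toNat_of_nonneg (by omega : 0 ≤ -m), D_neg] at this
    have h2 := (Sspan F).neg_mem this
    rwa [neg_neg] at h2

lemma VW_eq (t2 : F) (m : ℤ) :
    (RatFunc.X : RatFunc F) ^ m *
      ((algebraMap F (RatFunc F) t2 * RatFunc.X - algebraMap F (RatFunc F) t2⁻¹ * RatFunc.X⁻¹) /
        (RatFunc.X - RatFunc.X⁻¹)) +
    RatFunc.X ^ (-m) *
      ((algebraMap F (RatFunc F) t2 * RatFunc.X⁻¹ - algebraMap F (RatFunc F) t2⁻¹ * RatFunc.X) /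
        (RatFunc.X⁻¹ - RatFunc.X)) =
    algebraMap F (RatFunc F) t2 * D (m+1) - algebraMap F (RatFunc F) t2⁻¹ * D (m-1) := by
  have hX : (RatFunc.X : RatFunc F) ≠ 0 := RatFunc.X_ne_zero
  have hw : (RatFunc.X⁻¹ - RatFunc.X : RatFunc F) = -(RatFunc.X - RatFunc.X⁻¹) := by ring
  rw [hw, div_neg, D, D, mul_neg, ← mul_div_assoc, ← mul_div_assoc, ← mul_div_assoc,
    ← mul_div_assoc, ← sub_eq_add_neg, div_sub_div_same, ← sub_div]
  congr 1
  have e1 : (RatFunc.X : RatFunc F) ^ (m + 1) = RatFunc.X ^ m * RatFunc.X := by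
    rw [zpow_add₀ hX, zpow_one]
  have e2 : (RatFunc.X : RatFunc F) ^ (-(m + 1)) = RatFunc.X ^ (-m) * RatFunc.X⁻¹ := by
    rw [show -(m+1) = -m + -1 by ring, zpow_add₀ hX, zpow_neg_one]
  have e3 : (RatFunc.X : RatFunc F) ^ (m - 1) = RatFunc.X ^ m * RatFunc.X⁻¹ := by
    rw [show m - 1 = m + -1 by ring, zpow_add₀ hX, zpow_neg_one]
  have e4 : (RatFunc.X : RatFunc F) ^ (-(m - 1)) = RatFunc.X ^ (-m) * RatFunc.X := by
    rw [show -(m-1) = -m + 1 by ring, zpow_add₀ hX, zpow_one]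
  rw [e1, e2, e3, e4]
  ring

lemma VW_mem (t2 : F) (m : ℤ) :
    (RatFunc.X : RatFunc F) ^ m *
      ((algebraMap F (RatFunc F) t2 * RatFunc.X - algebraMap F (RatFunc F) t2⁻¹ * RatFunc.X⁻¹) /
        (RatFunc.X - RatFunc.X⁻¹)) +
    RatFunc.X ^ (-m) *
      ((algebraMap F (RatFunc F) t2 * RatFunc.X⁻¹ - algebraMap F (RatFunc F) t2⁻¹ * RatFunc.X) /
        (RatFunc.X⁻¹ - RatFunc.X)) ∈ Sspan F := by
  rw [VW_eq, ← Algebra.smul_def, ← Algebra.smul_def]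
  exact sub_mem (Submodule.smul_mem _ _ (D_mem _)) (Submodule.smul_mem _ _ (D_mem _))

lemma preserved (T : RatFunc F →ₗ[F] RatFunc F) (h1 : T 1 ∈ Sspan F)
    (hgen : ∀ n : ℕ, T ((RatFunc.X : RatFunc F) ^ (n:ℤ) + RatFunc.X ^ (-(n:ℤ))) ∈ Sspan F) :
    ∀ f ∈ Sspan F, T f ∈ Sspan F := by
  intro f hf
  induction hf using Submodule.span_induction with
  | mem g hg =>
    rcases hg with hg | ⟨n, rfl⟩
    · rw [Set.eq_of_mem_singleton hg]; exact h1
    · exact hgen n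
  | zero => rw [map_zero]; exact (Sspan F).zero_mem
  | add a b _ _ ha hb => rw [map_add]; exact (Sspan F).add_mem ha hb
  | smul a g _ hg => rw [map_smul]; exact (Sspan F).smul_mem a hg

-- appended to s3 content


theorem main (F : Type*) [Field F] (q2 t2 : F) (hq : q2 ≠ 0)
    (ϖ : RatFunc F ≃ₐ[F] RatFunc F)
    (hϖ : ϖ RatFunc.X = algebraMap F (RatFunc F) (q2 ^ 2) * RatFunc.X) :
    (∀ f ∈ Sspan F, LinearMap.mulLeft F ((RatFunc.X : RatFunc F) + RatFunc.X⁻¹) f ∈ Sspan F) ∧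
    (∀ k : ℤ, ∀ f ∈ Sspan F,
      (LinearMap.mulLeft F (algebraMap F (RatFunc F) q2 ^ (-k) * RatFunc.X ^ (-k) *
          ((algebraMap F (RatFunc F) t2 * RatFunc.X - algebraMap F (RatFunc F) t2⁻¹ * RatFunc.X⁻¹) /
            (RatFunc.X - RatFunc.X⁻¹))) ∘ₗ ϖ.toLinearMap +
        LinearMap.mulLeft F (algebraMap F (RatFunc F) q2 ^ (-k) * RatFunc.X ^ k *
          ((algebraMap F (RatFunc F) t2 * RatFunc.X⁻¹ - algebraMap F (RatFunc F) t2⁻¹ * RatFunc.X) /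
            (RatFunc.X⁻¹ - RatFunc.X))) ∘ₗ ϖ.symm.toLinearMap) f ∈ Sspan F) := by
  have hX : (RatFunc.X : RatFunc F) ≠ 0 := RatFunc.X_ne_zero
  have hQ : q2 ^ 2 ≠ 0 := pow_ne_zero _ hq
  have hcQ : algebraMap F (RatFunc F) (q2 ^ 2) ≠ 0 := by
    simpa using hQ
  have ϖpow : ∀ m : ℤ, ϖ ((RatFunc.X : RatFunc F) ^ m) =
      algebraMap F (RatFunc F) ((q2 ^ 2) ^ m) * RatFunc.X ^ m := by
    intro m
    rw [map_zpow₀, hϖ, mul_zpow, map_zpow₀]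
  have hsymmX : ϖ.symm (RatFunc.X : RatFunc F) = algebraMap F (RatFunc F) (q2 ^ 2)⁻¹ * RatFunc.X := by
    have h := ϖ.symm_apply_apply (RatFunc.X : RatFunc F)
    rw [hϖ, map_mul, AlgEquiv.commutes] at h
    rw [map_inv₀]
    exact (eq_inv_mul_iff_mul_eq₀ hcQ).mpr h
  have ϖsymmpow : ∀ m : ℤ, ϖ.symm ((RatFunc.X : RatFunc F) ^ m) =
      algebraMap F (RatFunc F) ((q2 ^ 2) ^ (-m)) * RatFunc.X ^ m := by
    intro m
    rw [map_zpow₀, hsymmX, mul_zpow, map_inv₀, inv_zpow, ← zpow_neg,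
      map_zpow₀ (algebraMap F (RatFunc F))]
  constructor
  · apply preserved
    · rw [LinearMap.mulLeft_apply, mul_one]
      simpa using E_mem (F := F) 1
    · intro n
      rw [LinearMap.mulLeft_apply]
      have key : ((RatFunc.X : RatFunc F) + RatFunc.X⁻¹) * (RatFunc.X ^ (n:ℤ) + RatFunc.X ^ (-(n:ℤ))) =
          (RatFunc.X ^ ((n:ℤ)+1) + RatFunc.X ^ (-((n:ℤ)+1))) +
          (RatFunc.X ^ ((n:ℤ)-1) + RatFunc.X ^ (-((n:ℤ)-1))) := by
        rw [zpow_add₀ hX, show -((n:ℤ)+1) = -(n:ℤ) + -1 by ring, zpow_add₀ hX,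
          show (n:ℤ)-1 = (n:ℤ) + -1 by ring, zpow_add₀ hX,
          show -((n:ℤ)+ -1) = -(n:ℤ) + 1 by ring, zpow_add₀ hX, zpow_one, zpow_neg_one]
        ring
      rw [key]
      exact (Sspan F).add_mem (E_mem _) (E_mem _)
  · intro k
    apply preserved
    · simp only [LinearMap.add_apply, LinearMap.coe_comp, Function.comp_apply,
        AlgEquiv.toLinearMap_apply, LinearMap.mulLeft_apply, map_one, mul_one]
      have key1 : (algebraMap F (RatFunc F)) q2 ^ (-k) * RatFunc.X ^ (-k) *
            (((algebraMap F (RatFunc F)) t2 * RatFunc.X -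
              (algebraMap F (RatFunc F)) t2⁻¹ * RatFunc.X⁻¹) / (RatFunc.X - RatFunc.X⁻¹)) +
          (algebraMap F (RatFunc F)) q2 ^ (-k) * RatFunc.X ^ k *
            (((algebraMap F (RatFunc F)) t2 * RatFunc.X⁻¹ -
              (algebraMap F (RatFunc F)) t2⁻¹ * RatFunc.X) / (RatFunc.X⁻¹ - RatFunc.X)) =
          algebraMap F (RatFunc F) (q2 ^ (-k)) * (RatFunc.X ^ (-k) *
            (((algebraMap F (RatFunc F)) t2 * RatFunc.X -
              (algebraMap F (RatFunc F)) t2⁻¹ * RatFunc.X⁻¹) / (RatFunc.X - RatFunc.X⁻¹)) +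
          RatFunc.X ^ (-(-k)) *
            (((algebraMap F (RatFunc F)) t2 * RatFunc.X⁻¹ -
              (algebraMap F (RatFunc F)) t2⁻¹ * RatFunc.X) / (RatFunc.X⁻¹ - RatFunc.X))) := by
        rw [map_zpow₀ (algebraMap F (RatFunc F)) q2 (-k), neg_neg]
        ring
      have m0 := Submodule.smul_mem (Sspan F) (q2 ^ (-k)) (VW_mem t2 (-k))
      rw [Algebra.smul_def] at m0
      rw [key1]
      exact m0
    · intro n
      simp only [LinearMap.add_apply, LinearMap.coe_comp, Function.comp_apply,
        AlgEquiv.toLinearMap_apply, LinearMap.mulLeft_apply, map_add]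
      rw [ϖpow, ϖpow, ϖsymmpow, ϖsymmpow]
      have target : algebraMap F (RatFunc F) (q2 ^ (-k)) *
          (algebraMap F (RatFunc F) ((q2 ^ 2) ^ (n:ℤ)) * (RatFunc.X ^ ((n:ℤ) - k) *
            (((algebraMap F (RatFunc F)) t2 * RatFunc.X -
              (algebraMap F (RatFunc F)) t2⁻¹ * RatFunc.X⁻¹) / (RatFunc.X - RatFunc.X⁻¹)) +
          RatFunc.X ^ (-((n:ℤ) - k)) *
            (((algebraMap F (RatFunc F)) t2 * RatFunc.X⁻¹ -
              (algebraMap F (RatFunc F)) t2⁻¹ * RatFunc.X) / (RatFunc.X⁻¹ - RatFunc.X))) +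
          algebraMap F (RatFunc F) ((q2 ^ 2) ^ (-(n:ℤ))) * (RatFunc.X ^ (-(n:ℤ) - k) *
            (((algebraMap F (RatFunc F)) t2 * RatFunc.X -
              (algebraMap F (RatFunc F)) t2⁻¹ * RatFunc.X⁻¹) / (RatFunc.X - RatFunc.X⁻¹)) +
          RatFunc.X ^ (-(-(n:ℤ) - k)) *
            (((algebraMap F (RatFunc F)) t2 * RatFunc.X⁻¹ -
              (algebraMap F (RatFunc F)) t2⁻¹ * RatFunc.X) / (RatFunc.X⁻¹ - RatFunc.X)))) ∈
          Sspan F := by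
        have m1 := Submodule.smul_mem (Sspan F) ((q2 ^ 2) ^ (n:ℤ)) (VW_mem t2 ((n:ℤ) - k))
        rw [Algebra.smul_def] at m1
        have m2 := Submodule.smul_mem (Sspan F) ((q2 ^ 2) ^ (-(n:ℤ))) (VW_mem t2 (-(n:ℤ) - k))
        rw [Algebra.smul_def] at m2
        have m3 := Submodule.smul_mem (Sspan F) (q2 ^ (-k)) (add_mem m1 m2)
        rw [Algebra.smul_def] at m3
        exact m3
      convert target using 1
      rw [show ((n:ℤ) - k) = (n:ℤ) + -k from sub_eq_add_neg _ _,
        show (-(n:ℤ) - k) = -(n:ℤ) + -k by ring,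
        show (-((n:ℤ) + -k)) = k + -(n:ℤ) by ring,
        show (-(-(n:ℤ) + -k)) = (n:ℤ) + k by ring,
        zpow_add₀ hX (n:ℤ) (-k), zpow_add₀ hX (-(n:ℤ)) (-k),
        zpow_add₀ hX k (-(n:ℤ)), zpow_add₀ hX (n:ℤ) k,
        map_zpow₀ (algebraMap F (RatFunc F)) q2 (-k), neg_neg]
      ring

end GammaAux


/-- the operators `x = X + X⁻¹` and
`γ_k = q^{-k/2}X^{-k}V(X)ϖ + q^{-k/2}X^{k}V(X⁻¹)ϖ⁻¹` on `F(X)` preserve the subspace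
`F[X^{±1}]^{ℤ₂}` of symmetric Laurent polynomials (spanned by `1` and the elements
`X^n + X^{-n}`). -/
theorem gamma_preserves_symmetric_laurent
    (F : Type*) [Field F] (q2 t2 : F) (hq : q2 ≠ 0) (ht : t2 ≠ 0)
    (ϖ : RatFunc F ≃ₐ[F] RatFunc F)
    (hϖ : ϖ RatFunc.X = algebraMap F (RatFunc F) (q2 ^ 2) * RatFunc.X) :
    let X : RatFunc F := RatFunc.X
    let c : F → RatFunc F := algebraMap F (RatFunc F)
    let V : RatFunc F := (c t2 * X - c t2⁻¹ * X⁻¹) / (X - X⁻¹)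
    let W : RatFunc F := (c t2 * X⁻¹ - c t2⁻¹ * X) / (X⁻¹ - X)
    let x : RatFunc F →ₗ[F] RatFunc F := LinearMap.mulLeft F (X + X⁻¹)
    let γ : ℤ → (RatFunc F →ₗ[F] RatFunc F) := fun k =>
      LinearMap.mulLeft F (c q2 ^ (-k) * X ^ (-k) * V) ∘ₗ ϖ.toLinearMap +
        LinearMap.mulLeft F (c q2 ^ (-k) * X ^ k * W) ∘ₗ ϖ.symm.toLinearMap
    let S : Submodule F (RatFunc F) :=
      Submodule.span F ({1} ∪ Set.range (fun n : ℕ => X ^ (n : ℤ) + X ^ (-(n : ℤ))))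
    (∀ f ∈ S, x f ∈ S) ∧ (∀ k : ℤ, ∀ f ∈ S, γ k f ∈ S) := by
  intro X c V W x γ S
  exact GammaAux.main F q2 t2 hq ϖ hϖ
end
end
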